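/- Let G be a finite group with |G| invertible in R. The idempotents e_H^G ∈ RB(G), for H running over a set of representatives of conjugacy classes of subgroups of G, are orthogonal idempotents whose sum is the identity element [G/G] of RB(G). -/

import Mathlib

/-!
The marks `Φ (sG j)` embed `A` into `ι → R`: on the basis `[G/sG k]` the table of marks is
triangular with respect to `|sG k|` (a nonzero mark `Φ H [G/K]` forces `H` to be subconjugate
to `K`), and its diagonal entries `|N_G(H) : H|` are units. Möbius
inversion over the subgroup lattice gives `Φ H (e_L) = |{g : g⁻¹Hg = L}| / |N_G(L)|`, so `e_{sG i}`
is sent to the `i`-th standard idempotent of `ι → R`.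
-/

open Finset

section Mobius

variable {α : Type*} [PartialOrder α] [Fintype α] [∀ a b : α, Decidable (a ≤ b)]

theorem sum_mobius_mul_ite_le [DecidableEq α] (mu : α → α → ℤ) (hmuSelf : ∀ a, mu a a = 1)
    (hmuRec : ∀ a c, a < c → ∑ b ∈ univ.filter (fun b => a ≤ b ∧ b ≤ c), mu b c = 0) (a c : α) :
    ∑ b ∈ univ.filter (· ≤ c), mu b c * (if a ≤ b then 1 else 0) = if a = c then 1 else 0 := by
  simp only [mul_boole, ← sum_filter, filter_filter]
  rcases eq_or_ne a c with rfl | hne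
  · rw [if_pos rfl, filter_congr (q := (· = a)) fun b _ => ⟨fun h => le_antisymm h.1 h.2,
      fun h => ⟨h.le, h.ge⟩⟩, filter_eq', if_pos (mem_univ a), sum_singleton, hmuSelf]
  rw [if_neg hne]
  by_cases hac : a ≤ c
  · rw [← hmuRec a c (lt_of_le_of_ne hac hne)]
    exact sum_congr (filter_congr fun b _ => and_comm) fun _ _ => rfl
  · exact sum_eq_zero fun b hb => absurd ((mem_filter.1 hb).2.2.trans (mem_filter.1 hb).2.1) hac

end Mobius

theorem Module.Basis.eq_zero_of_triangular {ι R M κ : Type*} [Semiring R] [AddCommMonoid M]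
    [Module R M] [LinearOrder κ] (ℬ : Module.Basis ι R M) (φ : ι → M →ₗ[R] R) (w : ι → κ)
    (hdiag : ∀ j, IsUnit (φ j (ℬ j))) (hoff : ∀ j k, k ≠ j → w k ≤ w j → φ j (ℬ k) = 0)
    {a : M} (ha : ∀ j, φ j a = 0) : a = 0 := by
  by_contra ha0
  have hsupp : (ℬ.repr a).support.Nonempty := by
    simpa [Finsupp.support_nonempty_iff] using ha0
  obtain ⟨j, hj, hmax⟩ := exists_max_image _ w hsupp
  have hexpand : φ j a = ℬ.repr a j * φ j (ℬ j) := by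
    conv_lhs => rw [← ℬ.linearCombination_repr a]
    rw [Finsupp.linearCombination_apply, map_finsuppSum, Finsupp.sum, sum_eq_single j]
    · simp
    · intro k hk hkj
      simp [hoff j k hkj (hmax k hk)]
    · exact fun hj' => absurd hj hj'
  exact Finsupp.mem_support_iff.1 hj <| (hdiag j).mul_left_eq_zero.1 (hexpand ▸ ha j)

namespace Subgroup

variable {G : Type*} [Group G]

theorem map_conj_eq_self_iff {g : G} {H : Subgroup G} :
    H.map (MulAut.conj g).toMonoidHom = H ↔ g ∈ normalizer (H : Set G) :=
  -- `H.map (MulAut.conj g).toMonoidHom` is definitionally `ConjAct.toConjAct g • H`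
  conjAct_pointwise_smul_iff

theorem card_map_conj (g : G) (H : Subgroup G) :
    Nat.card (H.map (MulAut.conj g).toMonoidHom) = Nat.card H :=
  card_map_of_injective (MulAut.conj g).injective

theorem forall_smul_mk_eq_iff_map_conj_inv_le {H K : Subgroup G} {g : G} :
    (∀ h ∈ H, h • (g : G ⧸ K) = g) ↔ H.map (MulAut.conj g⁻¹).toMonoidHom ≤ K := by
  rw [map_le_iff_le_comap, SetLike.le_def]
  simp only [mem_comap, MulEquiv.coe_toMonoidHom, MulAut.conj_apply, inv_inv,
    MulAction.Quotient.smul_mk, smul_eq_mul, QuotientGroup.eq]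
  refine ⟨fun hH h hh => ?_, fun hK h hh => ?_⟩
  · simpa [mul_assoc] using hH h⁻¹ (inv_mem hh)
  · simpa [mul_assoc] using hK (inv_mem hh)

theorem card_subtype_map_conj_inv_le (H K : Subgroup G) :
    Nat.card {g : G // H.map (MulAut.conj g⁻¹).toMonoidHom ≤ K} =
      Nat.card K * Nat.card {x : G ⧸ K // ∀ h ∈ H, h • x = x} :=
  (Nat.card_congr <| Equiv.subtypeEquivRight fun _ =>
      forall_smul_mk_eq_iff_map_conj_inv_le.symm).trans
    (QuotientGroup.card_preimage_mk K {x | ∀ h ∈ H, h • x = x})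

theorem card_subtype_map_conj_inv_eq_self (H : Subgroup G) :
    Nat.card {g : G // H.map (MulAut.conj g⁻¹).toMonoidHom = H} =
      Nat.card (normalizer (H : Set G)) :=
  Nat.card_congr <| Equiv.subtypeEquivRight fun _ => map_conj_eq_self_iff.trans inv_mem_iff

section Finite

variable [Finite G]

theorem map_conj_le_self_iff {g : G} {H : Subgroup G} :
    H.map (MulAut.conj g).toMonoidHom ≤ H ↔ H.map (MulAut.conj g).toMonoidHom = H :=
  ⟨fun hle => eq_of_le_of_card_ge hle (card_map_conj g H).ge, le_of_eq⟩

theorem card_mul_card_fixedPoints_quotient_self (H : Subgroup G) :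
    Nat.card H * Nat.card {x : G ⧸ H // ∀ h ∈ H, h • x = x} =
      Nat.card (normalizer (H : Set G)) := by
  rw [← card_subtype_map_conj_inv_le, ← card_subtype_map_conj_inv_eq_self]
  exact Nat.card_congr <| Equiv.subtypeEquivRight fun _ => map_conj_le_self_iff

theorem exists_map_conj_eq_of_fixedPoint {H K : Subgroup G} (hcard : Nat.card K ≤ Nat.card H)
    {x : G ⧸ K} (hx : ∀ h ∈ H, h • x = x) : ∃ g : G, H.map (MulAut.conj g).toMonoidHom = K := by
  induction x using QuotientGroup.induction_on with
  | H g =>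
    exact ⟨g⁻¹, eq_of_le_of_card_ge (forall_smul_mk_eq_iff_map_conj_inv_le.1 hx)
      (hcard.trans (card_map_conj _ H).ge)⟩

end Finite

theorem sum_card_mul_mobius_mul_card_fixedPoints [Fintype G] [Fintype (Subgroup G)]
    [∀ K L : Subgroup G, Decidable (K ≤ L)] (mu : Subgroup G → Subgroup G → ℤ)
    (hmuSelf : ∀ H, mu H H = 1)
    (hmuRec : ∀ K H, K < H → ∑ L ∈ univ.filter (fun L => K ≤ L ∧ L ≤ H), mu L H = 0)
    (H L : Subgroup G) :
    ∑ K ∈ univ.filter (· ≤ L),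
        (Nat.card K : ℤ) * mu K L * Nat.card {x : G ⧸ K // ∀ h ∈ H, h • x = x} =
      Nat.card {g : G // H.map (MulAut.conj g⁻¹).toMonoidHom = L} := by
  classical
  calc _ = ∑ K ∈ univ.filter (· ≤ L), mu K L *
        ∑ g : G, if H.map (MulAut.conj g⁻¹).toMonoidHom ≤ K then 1 else 0 := by
        refine sum_congr rfl fun K _ => ?_
        rw [sum_boole, ← Fintype.card_subtype, ← Nat.card_eq_fintype_card,
          card_subtype_map_conj_inv_le]
        push_cast
        ring
    _ = ∑ g : G, ∑ K ∈ univ.filter (· ≤ L),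
        mu K L * if H.map (MulAut.conj g⁻¹).toMonoidHom ≤ K then 1 else 0 := by
        simp only [mul_sum]
        exact sum_comm
    _ = ∑ g : G, if H.map (MulAut.conj g⁻¹).toMonoidHom = L then 1 else 0 :=
        sum_congr rfl fun g _ => sum_mobius_mul_ite_le mu hmuSelf hmuRec _ L
    _ = _ := by rw [sum_boole, ← Fintype.card_subtype, Nat.card_eq_fintype_card]

theorem map_sum_card_mul_mobius_smul {R A : Type*} [Ring R] [AddCommGroup A] [Fintype G]
    [Fintype (Subgroup G)] [∀ K L : Subgroup G, Decidable (K ≤ L)]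
    (mu : Subgroup G → Subgroup G → ℤ) (hmuSelf : ∀ H, mu H H = 1)
    (hmuRec : ∀ K H, K < H → ∑ L ∈ univ.filter (fun L => K ≤ L ∧ L ≤ H), mu L H = 0)
    (b : Subgroup G → A) {H : Subgroup G} (f : A →+ R)
    (hf : ∀ K, f (b K) = Nat.card {x : G ⧸ K // ∀ h ∈ H, h • x = x}) (L : Subgroup G) :
    f (∑ K ∈ univ.filter (· ≤ L), ((Nat.card K : ℤ) * mu K L) • b K) =
      Nat.card {g : G // H.map (MulAut.conj g⁻¹).toMonoidHom = L} := by
  simp only [map_sum, map_zsmul, hf, zsmul_eq_mul]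
  rw [← Int.cast_natCast, ← sum_card_mul_mobius_mul_card_fixedPoints mu hmuSelf hmuRec H L]
  push_cast
  rfl

theorem eq_zero_of_forall_mark_eq_zero {R A ι : Type*} [CommSemiring R] [AddCommMonoid A]
    [Module R A] [Finite G] (sG : ι → Subgroup G)
    (hirr : ∀ i j, (∃ g : G, (sG i).map (MulAut.conj g).toMonoidHom = sG j) → i = j)
    (ℬ : Module.Basis ι R A) (φ : ι → A →ₗ[R] R)
    (hφ : ∀ j k, φ j (ℬ k) = Nat.card {x : G ⧸ sG k // ∀ h ∈ sG j, h • x = x})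
    (hN : ∀ j, IsUnit (Nat.card (normalizer (sG j : Set G)) : R)) {a : A}
    (ha : ∀ j, φ j a = 0) : a = 0 := by
  refine ℬ.eq_zero_of_triangular φ (fun k => Nat.card (sG k)) (fun j => ?_)
    (fun j k hkj hcard => ?_) ha
  · rw [hφ]
    refine isUnit_of_mul_isUnit_right (x := (Nat.card (sG j) : R)) ?_
    rw [← Nat.cast_mul, card_mul_card_fixedPoints_quotient_self]
    exact hN j
  · have : IsEmpty {x : G ⧸ sG k // ∀ h ∈ sG j, h • x = x} :=
      ⟨fun x => hkj (hirr j k (exists_map_conj_eq_of_fixedPoint hcard x.2)).symm⟩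
    rw [hφ, Nat.card_of_isEmpty, Nat.cast_zero]

end Subgroup

/-- Let `G` be a finite group with `|G|` invertible in `R`.  In the Burnside algebra
`A = RB(G)` (axiomatized as in the paper by conjugation-invariant classes `b K = [G/K]`, a
basis indexed by a complete irredundant set `sG` of representatives of conjugacy classes of
subgroups, `[G/G] = 1`, and mark algebra homomorphisms counting fixed points), the elements
`e i = e_{sG i}^G = (1/|N_G(sG i)|) Σ_{K ≤ sG i} |K| μ(K, sG i) [G/K]` (with `μ` the Möbius
function of the subgroup lattice) are orthogonal idempotents whose sum is the identity
`[G/G]` of `RB(G)`. -/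
theorem burnside_idempotents_orthogonal_sum_one
    {R : Type} [CommRing R] {G : Type} [Group G] [Fintype G]
    [Fintype (Subgroup G)] [∀ K H : Subgroup G, Decidable (K ≤ H)]
    {A : Type} [CommRing A] [Algebra R A]
    {ι : Type} [Fintype ι] (sG : ι → Subgroup G)
    (hreps : ∀ H : Subgroup G, ∃ (i : ι) (g : G),
      Subgroup.map (MulAut.conj g).toMonoidHom (sG i) = H)
    (hirr : ∀ i j : ι,
      (∃ g : G, Subgroup.map (MulAut.conj g).toMonoidHom (sG i) = sG j) → i = j)
    (b : Subgroup G → A)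
    (hbconj : ∀ (g : G) (K : Subgroup G),
      b (Subgroup.map (MulAut.conj g).toMonoidHom K) = b K)
    (ℬ : Module.Basis ι R A) (hbℬ : ∀ i : ι, b (sG i) = ℬ i)
    (itop : ι) (hitop : sG itop = ⊤) (hone : ℬ itop = 1)
    (Φ : Subgroup G → (A →ₐ[R] R))
    (hΦ : ∀ H K : Subgroup G,
      Φ H (b K) = (Nat.card {x : G ⧸ K // ∀ h ∈ H, h • x = x} : R))
    (hG : IsUnit (Fintype.card G : R))
    (mu : Subgroup G → Subgroup G → ℤ)
    (hmuSelf : ∀ H : Subgroup G, mu H H = 1)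
    (hmuRec : ∀ K H : Subgroup G, K < H →
      (∑ L ∈ Finset.univ.filter (fun L : Subgroup G => K ≤ L ∧ L ≤ H), mu L H) = 0)
    (nInv : ι → R)
    (hnInv : ∀ i : ι, nInv i * ((Nat.card (Subgroup.normalizer (sG i : Set G)) : R)) = 1)
    (e : ι → A)
    (he : ∀ i : ι,
      e i = nInv i • ∑ K ∈ Finset.univ.filter (fun K : Subgroup G => K ≤ sG i),
        (((Nat.card K : ℤ) * mu K (sG i)) • b K)) :
    (∀ i : ι, e i * e i = e i)
      ∧ (∀ i j : ι, i ≠ j → e i * e j = 0)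
      ∧ (∑ i : ι, e i = 1) := by
  classical
  have hmark : ∀ i j, Φ (sG j) (e i) = (Pi.single i 1 : ι → R) j := by
    intro i j
    have hcount := Subgroup.map_sum_card_mul_mobius_smul mu hmuSelf hmuRec b
      (Φ (sG j) : A →+ R) (hΦ (sG j)) (sG i)
    rw [AlgHom.coe_toAddMonoidHom] at hcount
    rw [he, map_smul, hcount, smul_eq_mul]
    rcases eq_or_ne i j with rfl | hij
    · rw [Subgroup.card_subtype_map_conj_inv_eq_self, hnInv, Pi.single_eq_same]
    · have : IsEmpty {g : G // (sG j).map (MulAut.conj g⁻¹).toMonoidHom = sG i} :=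
        ⟨fun g => hij (hirr j i ⟨g.1⁻¹, g.2⟩).symm⟩
      rw [Nat.card_of_isEmpty, Nat.cast_zero, mul_zero, Pi.single_eq_of_ne hij.symm]
  have hsep : Function.Injective (AlgHom.pi fun j => Φ (sG j)) :=
    (injective_iff_map_eq_zero _).2 fun a ha =>
      Subgroup.eq_zero_of_forall_mark_eq_zero sG hirr ℬ (fun j => (Φ (sG j)).toLinearMap)
        (fun j k => by rw [AlgHom.toLinearMap_apply, ← hbℬ, hΦ])
        (fun j => .of_mul_eq_one_right _ (hnInv j))
        (fun j => congrFun ha j)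
  have hcoi : CompleteOrthogonalIdempotents e := by
    rw [← CompleteOrthogonalIdempotents.map_injective_iff (AlgHom.pi _).toRingHom hsep]
    convert CompleteOrthogonalIdempotents.single fun _ : ι => R with i
    ext j
    exact hmark i j
  exact ⟨hcoi.idem, fun i j hij => hcoi.ortho hij, hcoi.complete⟩
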